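/- The auxiliary iteration iso is correct: for f ∈ RPP^k with translated iso ω_f, the structurally recursive iso ω_aux : Z^k ⊗ npos ↔ Z^k ⊗ npos satisfies ω_aux(x̄₁,…,x̄_k, n̲) →* (z̄₁,…,z̄_k, n̲) where (z₁,…,z_k) = f^n(x₁,…,x_k), for every strictly positive natural n. -/

import Mathlib

namespace RPPx

/-- Recursive Primitive Permutations, inductively generated by arity. -/
inductive RPP : ℕ → Type
  | id : RPP 1
  | suc : RPP 1
  | pre : RPP 1
  | sign : RPP 1
  | swap : RPP 2
  | comp {k : ℕ} (f g : RPP k) : RPP k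
  | par {k l : ℕ} (f : RPP k) (g : RPP l) : RPP (k + l)
  | it {k : ℕ} (f : RPP k) : RPP (k + 1)
  | ite {k : ℕ} (f g h : RPP k) : RPP (k + 1)

/-- The semantics of an RPP function, as a map `ℤ^k → ℤ^k`. -/
def eval : ∀ {k : ℕ}, RPP k → (Fin k → ℤ) → (Fin k → ℤ)
  | _, .id => fun v => v
  | _, .suc => fun v i => v i + 1
  | _, .pre => fun v i => v i - 1
  | _, .sign => fun v i => -(v i)
  | _, .swap => fun v i => v i.rev
  | _, .comp f g => fun v => eval g (eval f v)
  | _, @RPP.par k l f g =>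
      fun v => Fin.append (eval f (v ∘ Fin.castAdd l)) (eval g (v ∘ Fin.natAdd k))
  | _, @RPP.it k f =>
      fun v => Fin.snoc ((eval f)^[(v (Fin.last k)).natAbs] (Fin.init v)) (v (Fin.last k))
  | _, @RPP.ite k f g h =>
      fun v => Fin.snoc
        ((if 0 < v (Fin.last k) then eval f
          else if v (Fin.last k) = 0 then eval g else eval h) (Fin.init v))
        (v (Fin.last k))

/-- The structurally defined inverse of an RPP function. -/
def inv : ∀ {k : ℕ}, RPP k → RPP k
  | _, .id => .id
  | _, .suc => .pre
  | _, .pre => .suc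
  | _, .sign => .sign
  | _, .swap => .swap
  | _, .comp f g => .comp (inv g) (inv f)
  | _, .par f g => .par (inv f) (inv g)
  | _, .it f => .it (inv f)
  | _, .ite f g h => .ite (inv f) (inv g) (inv h)

end RPPx

namespace LinRev

/-! ## Types of the linear reversible language:  A ::= 1 | A⊕B | A⊗B | μX.A | X  -/

inductive Ty : Type
  | one : Ty
  | sum : Ty → Ty → Ty
  | prod : Ty → Ty → Ty
  | mu : Ty → Ty
  | tvar : ℕ → Ty
  deriving DecidableEq

/-- Substitute type `T` for the (de Bruijn) type variable `n` in a type. -/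
def Ty.substF : Ty → ℕ → Ty → Ty
  | .one, _, _ => .one
  | .sum A B, n, T => .sum (A.substF n T) (B.substF n T)
  | .prod A B, n, T => .prod (A.substF n T) (B.substF n T)
  | .mu A, n, T => .mu (A.substF (n + 1) T)
  | .tvar m, n, T => if m = n then T else .tvar m

/-- `A[X ← μX.A]`, the one-step unfolding of `μX.A` with body `A`. -/
def Ty.unfold (A : Ty) : Ty := A.substF 0 (.mu A)

/-! ## Values:  v ::= () | x | inl v | inr v | ⟨v,v⟩ | fold v  -/

inductive Val : Type
  | unit : Val
  | var : ℕ → Val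
  | inl : Val → Val
  | inr : Val → Val
  | pair : Val → Val → Val
  | fold : Val → Val
  deriving DecidableEq

/-- Free variables of a value. -/
def Val.fv : Val → Finset ℕ
  | .unit => ∅
  | .var x => {x}
  | .inl v => v.fv
  | .inr v => v.fv
  | .pair v w => v.fv ∪ w.fv
  | .fold v => v.fv

/-! ## Substitutions -/

/-- A substitution: a partial map from variables to values. -/
abbrev Sub := ℕ → Option Val

/-- The support of a substitution. -/
def Sub.supp (σ : Sub) : Set ℕ := {x | σ x ≠ none}

/-- Disjointness of supports. -/
def Sub.disj (σ₁ σ₂ : Sub) : Prop := ∀ x, σ₁ x = none ∨ σ₂ x = none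

/-- Union of two substitutions. -/
def Sub.union (σ₁ σ₂ : Sub) : Sub := fun x => (σ₁ x).orElse (fun _ => σ₂ x)

/-- Applying a substitution to a value. -/
def Val.applySub (σ : Sub) : Val → Val
  | .unit => .unit
  | .var x => (σ x).getD (.var x)
  | .inl v => .inl (v.applySub σ)
  | .inr v => .inr (v.applySub σ)
  | .pair v w => .pair (v.applySub σ) (w.applySub σ)
  | .fold v => .fold (v.applySub σ)

/-- The pattern-matching judgment `σ[p] = v`. -/
inductive Matches : Sub → Val → Val → Prop
  | unit : Matches (fun _ => none) .unit .unit
  | var (x : ℕ) (v : Val) :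
      Matches (fun y => if y = x then some v else none) (.var x) v
  | inl {σ p v} : Matches σ p v → Matches σ (.inl p) (.inl v)
  | inr {σ p v} : Matches σ p v → Matches σ (.inr p) (.inr v)
  | fold {σ p v} : Matches σ p v → Matches σ (.fold p) (.fold v)
  | pair {σ₁ σ₂ p₁ p₂ v₁ v₂} :
      Matches σ₁ p₁ v₁ → Matches σ₂ p₂ v₂ → Sub.disj σ₁ σ₂ →
      Matches (σ₁.union σ₂) (.pair p₁ p₂) (.pair v₁ v₂)

/-! ## The exhaustivity/non-overlapping predicate `OD_A(S)` -/

def proj1 (S : Set Val) : Set Val := {v | ∃ w, Val.pair v w ∈ S}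
def proj2 (S : Set Val) : Set Val := {w | ∃ v, Val.pair v w ∈ S}
def sect1 (S : Set Val) (v : Val) : Set Val := {w | Val.pair v w ∈ S}
def sect2 (S : Set Val) (w : Val) : Set Val := {v | Val.pair v w ∈ S}

inductive OD : Ty → Set Val → Prop
  | var (A : Ty) (x : ℕ) : OD A {Val.var x}
  | unit : OD .one {Val.unit}
  | sum {A B : Ty} {S T : Set Val} :
      OD A S → OD B T → OD (.sum A B) (Val.inl '' S ∪ Val.inr '' T)
  | mu {A : Ty} {S : Set Val} :
      OD A.unfold S → OD (.mu A) (Val.fold '' S)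
  | prodL {A B : Ty} {S : Set Val} :
      (∀ u ∈ S, ∃ v w, u = Val.pair v w) →
      OD A (proj1 S) → (∀ v ∈ proj1 S, OD B (sect1 S v)) →
      OD (.prod A B) S
  | prodR {A B : Ty} {S : Set Val} :
      (∀ u ∈ S, ∃ v w, u = Val.pair v w) →
      OD B (proj2 S) → (∀ w ∈ proj2 S, OD A (sect2 S w)) →
      OD (.prod A B) S

/-! ## Linear typing contexts (variables, at most one occurrence each) -/

abbrev Ctx := ℕ → Option Ty

def Ctx.empty : Ctx := fun _ => none
def Ctx.single (x : ℕ) (A : Ty) : Ctx := fun y => if y = x then some A else none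
def Ctx.disj (Γ Δ : Ctx) : Prop := ∀ x, Γ x = none ∨ Δ x = none
def Ctx.union (Γ Δ : Ctx) : Ctx := fun x => (Γ x).orElse (fun _ => Δ x)
def Ctx.unions (L : List Ctx) : Ctx := L.foldr Ctx.union Ctx.empty

/-- Linear typing of values: `Δ ⊢ v : A`. -/
inductive VTy : Ctx → Val → Ty → Prop
  | unit : VTy Ctx.empty .unit .one
  | var (x : ℕ) (A : Ty) : VTy (Ctx.single x A) (.var x) A
  | inl {Γ v A B} : VTy Γ v A → VTy Γ (.inl v) (.sum A B)
  | inr {Γ v A B} : VTy Γ v B → VTy Γ (.inr v) (.sum A B)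
  | fold {Γ v A} : VTy Γ v A.unfold → VTy Γ (.fold v) (.mu A)
  | pair {Γ Δ v w A B} :
      VTy Γ v A → VTy Δ w B → Ctx.disj Γ Δ →
      VTy (Γ.union Δ) (.pair v w) (.prod A B)

end LinRev
namespace LinRev

/-! ## Patterns, terms, isos -/

inductive Pat : Type
  | pvar : ℕ → Pat
  | ppair : Pat → Pat → Pat
  deriving DecidableEq

def Pat.toVal : Pat → Val
  | .pvar x => .var x
  | .ppair p q => .pair p.toVal q.toVal

def Pat.vars : Pat → Finset ℕ
  | .pvar x => {x}
  | .ppair p q => p.vars ∪ q.vars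

mutual
  inductive Term : Type
    | unit : Term
    | var : ℕ → Term
    | inl : Term → Term
    | inr : Term → Term
    | pair : Term → Term → Term
    | fold : Term → Term
    | app : Iso → Term → Term
    | lett : Pat → Term → Term → Term

  inductive Iso : Type
    | clauses : Clauses → Iso
    | fixI : ℕ → Iso → Iso
    | ivar : ℕ → Iso

  inductive Clauses : Type
    | nil : Clauses
    | cons : Val → Term → Clauses → Clauses
end

def Clauses.toList : Clauses → List (Val × Term)
  | .nil => []
  | .cons v e r => (v, e) :: r.toList

def Val.toTerm : Val → Term
  | .unit => .unit
  | .var x => .var x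
  | .inl v => .inl v.toTerm
  | .inr v => .inr v.toTerm
  | .pair v w => .pair v.toTerm w.toTerm
  | .fold v => .fold v.toTerm

def Pat.toTerm (p : Pat) : Term := p.toVal.toTerm

def Term.asVal : Term → Option Val
  | .unit => some .unit
  | .var x => some (.var x)
  | .inl t => t.asVal.map .inl
  | .inr t => t.asVal.map .inr
  | .pair a b =>
      match a.asVal, b.asVal with
      | some v, some w => some (.pair v w)
      | _, _ => none
  | .fold t => t.asVal.map .fold
  | _ => none

def Term.asPat : Term → Option Pat
  | .var x => some (.pvar x)
  | .pair a b =>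
      match a.asPat, b.asPat with
      | some p, some q => some (.ppair p q)
      | _, _ => none
  | _ => none

/-- `Val(e)`: the value at the end of a chain of lets. -/
def Term.valOf : Term → Option Val
  | .lett _ _ t₂ => t₂.valOf
  | t => t.asVal

/-- Free (term) variables of a term. -/
def Term.fvT : Term → Finset ℕ
  | .unit => ∅
  | .var x => {x}
  | .inl t => t.fvT
  | .inr t => t.fvT
  | .fold t => t.fvT
  | .pair a b => a.fvT ∪ b.fvT
  | .app _ t => t.fvT
  | .lett p a b => a.fvT ∪ (b.fvT \ p.vars)

/-- Applying a (value) substitution to a term. -/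
def Term.applySub (σ : Sub) : Term → Term
  | .unit => .unit
  | .var x => ((σ x).map Val.toTerm).getD (.var x)
  | .inl t => .inl (t.applySub σ)
  | .inr t => .inr (t.applySub σ)
  | .pair a b => .pair (a.applySub σ) (b.applySub σ)
  | .fold t => .fold (t.applySub σ)
  | .app ω t => .app ω (t.applySub σ)
  | .lett p a b => .lett p (a.applySub σ) (b.applySub σ)

/-! ## Substitution of iso-variables -/

mutual
  def Term.isoSub (f : ℕ) (w : Iso) : Term → Term
    | .unit => .unit
    | .var x => .var x
    | .inl t => .inl (Term.isoSub f w t)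
    | .inr t => .inr (Term.isoSub f w t)
    | .pair a b => .pair (Term.isoSub f w a) (Term.isoSub f w b)
    | .fold t => .fold (Term.isoSub f w t)
    | .app ω t => .app (Iso.isoSub f w ω) (Term.isoSub f w t)
    | .lett p a b => .lett p (Term.isoSub f w a) (Term.isoSub f w b)
  termination_by t => sizeOf t

  def Iso.isoSub (f : ℕ) (w : Iso) : Iso → Iso
    | .ivar g => if g = f then w else .ivar g
    | .fixI g ω => if g = f then .fixI g ω else .fixI g (Iso.isoSub f w ω)
    | .clauses l => .clauses (Clauses.isoSub f w l)
  termination_by ω => sizeOf ω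

  def Clauses.isoSub (f : ℕ) (w : Iso) : Clauses → Clauses
    | .nil => .nil
    | .cons v e r => .cons v (Term.isoSub f w e) (Clauses.isoSub f w r)
  termination_by l => sizeOf l
end

/-! ## Inversion of isos -/

mutual
  /-- The dual iso `ω⊥`. -/
  def Iso.inv : Iso → Iso
    | .ivar f => .ivar f
    | .fixI f ω => .fixI f ω.inv
    | .clauses l => .clauses l.inv
  termination_by ω => sizeOf ω

  def Clauses.inv : Clauses → Clauses
    | .nil => .nil
    | .cons v e r =>
        match invAux (Val.toTerm v) e with
        | some (v', e') => .cons v' e' r.inv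
        | none => .cons v e r.inv
  termination_by l => sizeOf l

  /-- Invert a clause body `let p₁ = ω₁ p₁' in … let pₙ = ωₙ pₙ' in v'`,
  reversing the lets and inverting each sub-iso; `acc` accumulates the result. -/
  def invAux : Term → Term → Option (Val × Term)
    | acc, .lett p (.app ω t) e =>
        match t.asPat with
        | some p' => invAux (.lett p' (.app ω.inv p.toTerm) acc) e
        | none => none
    | acc, t => t.asVal.map (fun v' => (v', acc))
  termination_by _ e => sizeOf e
end

end LinRev
namespace LinRev

/-! ## Operational semantics (deterministic call-by-value) -/

inductive Step : Term → Term → Prop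
  | inlC {t t'} : Step t t' → Step (.inl t) (.inl t')
  | inrC {t t'} : Step t t' → Step (.inr t) (.inr t')
  | foldC {t t'} : Step t t' → Step (.fold t) (.fold t')
  | pairL {t t'} (v : Val) : Step t t' → Step (.pair t v.toTerm) (.pair t' v.toTerm)
  | pairR {t t'} (v : Val) : Step t t' → Step (.pair v.toTerm t) (.pair v.toTerm t')
  | appC {ω t t'} : Step t t' → Step (.app ω t) (.app ω t')
  | lettC {p t₁ t₁' t₂} : Step t₁ t₁' → Step (.lett p t₁ t₂) (.lett p t₁' t₂)
  | isoRec {f ω t} :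
      Step (.app (.fixI f ω) t) (.app (Iso.isoSub f (.fixI f ω) ω) t)
  | lettE {σ : Sub} {p : Pat} {v : Val} {t : Term} :
      Matches σ p.toVal v → Step (.lett p v.toTerm t) (t.applySub σ)
  | isoApp {σ : Sub} {l : Clauses} {vi : Val} {e : Term} {v : Val} :
      (vi, e) ∈ l.toList → Matches σ vi v →
      Step (.app (.clauses l) v.toTerm) (e.applySub σ)

/-- Reflexive-transitive closure `→*`. -/
def Steps : Term → Term → Prop := Relation.ReflTransGen Step

/-! ## Structural recursion criterion -/

/-- Flatten a right-nested tensor type into its components. -/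
def Ty.tuple : Ty → List Ty
  | .prod A B => A :: B.tuple
  | A => [A]

/-- Flatten a right-nested pair value into its components. -/
def Val.tuple : Val → List Val
  | .pair a b => a :: b.tuple
  | v => [v]

/-- If a term is a tuple of variables `(x₁, …, xₘ)`, return the variables. -/
def Term.tupleVars : Term → Option (List ℕ)
  | .var x => some [x]
  | .pair (.var x) t => t.tupleVars.map (x :: ·)
  | _ => none

/-- Subterm relation on values. -/
inductive Val.SubV : Val → Val → Prop
  | refl (v : Val) : Val.SubV v v
  | inl {u v} : Val.SubV u v → Val.SubV u (.inl v)
  | inr {u v} : Val.SubV u v → Val.SubV u (.inr v)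
  | fold {u v} : Val.SubV u v → Val.SubV u (.fold v)
  | pairL {u v w} : Val.SubV u v → Val.SubV u (.pair v w)
  | pairR {u v w} : Val.SubV u w → Val.SubV u (.pair v w)

/- `RecCallT f p t` : the recursive call `f p` occurs as a subterm of `t`. -/
mutual
  inductive RecCallT : ℕ → Term → Term → Prop
    | here (f : ℕ) (p : Term) : RecCallT f p (.app (.ivar f) p)
    | inl {f p t} : RecCallT f p t → RecCallT f p (.inl t)
    | inr {f p t} : RecCallT f p t → RecCallT f p (.inr t)
    | fold {f p t} : RecCallT f p t → RecCallT f p (.fold t)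
    | pairL {f p t₁ t₂} : RecCallT f p t₁ → RecCallT f p (.pair t₁ t₂)
    | pairR {f p t₁ t₂} : RecCallT f p t₂ → RecCallT f p (.pair t₁ t₂)
    | appIso {f p ω t} : RecCallI f p ω → RecCallT f p (.app ω t)
    | appArg {f p ω t} : RecCallT f p t → RecCallT f p (.app ω t)
    | lett₁ {f p q t₁ t₂} : RecCallT f p t₁ → RecCallT f p (.lett q t₁ t₂)
    | lett₂ {f p q t₁ t₂} : RecCallT f p t₂ → RecCallT f p (.lett q t₁ t₂)

  inductive RecCallI : ℕ → Term → Iso → Prop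
    | clauses {f p l} : RecCallC f p l → RecCallI f p (.clauses l)
    | fixI {f g p ω} : RecCallI f p ω → g ≠ f → RecCallI f p (.fixI g ω)

  inductive RecCallC : ℕ → Term → Clauses → Prop
    | head {f p v e r} : RecCallT f p e → RecCallC f p (.cons v e r)
    | tail {f p v e r} : RecCallC f p r → RecCallC f p (.cons v e r)
end

/-- The structural recursion criterion for `fix f. {vᵢ ↔ eᵢ} : A ↔ C`:
some component `Aⱼ = μX.B` of the input type is such that in every clause,
if the `j`-th component of the pattern is closed there is no recursive call,
and otherwise every recursive call `f p` has `p` a tuple of variables whose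
`j`-th component is a strict subterm of the `j`-th pattern component. -/
def StructRecClauses (f : ℕ) (l : Clauses) (A : Ty) : Prop :=
  ∃ (j : ℕ) (B : Ty), A.tuple[j]? = some (Ty.mu B) ∧
    ∀ c ∈ l.toList, ∃ vj, (Val.tuple c.1)[j]? = some vj ∧
      ((vj.fv = ∅ ∧ ∀ p, ¬ RecCallT f p c.2) ∨
       (∀ p, RecCallT f p c.2 → ∃ xs : List ℕ,
          p.tupleVars = some xs ∧ xs.length = A.tuple.length ∧
          ∃ x, xs[j]? = some x ∧ Val.SubV (.var x) vj ∧ Val.var x ≠ vj))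

/-! ## Typing of terms and isos -/

/-- An iso-variable context: at most one iso-variable `f : A ↔ B`. -/
abbrev IsoCtx := Option (ℕ × Ty × Ty)

/-- Typing of let-patterns, producing the context of bound variables. -/
inductive PatTy : Pat → Ty → Ctx → Prop
  | pvar (x : ℕ) (A : Ty) : PatTy (.pvar x) A (Ctx.single x A)
  | ppair {p q A B Γ Δ} :
      PatTy p A Γ → PatTy q B Δ → Ctx.disj Γ Δ →
      PatTy (.ppair p q) (.prod A B) (Γ.union Δ)

mutual
  /-- Typing of terms: `Δ; Ψ ⊢ t : A`. -/
  inductive TermTy : Ctx → IsoCtx → Term → Ty → Prop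
    | unit (Ψ : IsoCtx) : TermTy Ctx.empty Ψ .unit .one
    | var (x : ℕ) (A : Ty) (Ψ : IsoCtx) : TermTy (Ctx.single x A) Ψ (.var x) A
    | inl {Γ Ψ t A B} : TermTy Γ Ψ t A → TermTy Γ Ψ (.inl t) (.sum A B)
    | inr {Γ Ψ t A B} : TermTy Γ Ψ t B → TermTy Γ Ψ (.inr t) (.sum A B)
    | fold {Γ Ψ t A} : TermTy Γ Ψ t A.unfold → TermTy Γ Ψ (.fold t) (.mu A)
    | pair {Γ Δ Ψ t₁ t₂ A B} :
        TermTy Γ Ψ t₁ A → TermTy Δ Ψ t₂ B → Ctx.disj Γ Δ →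
        TermTy (Γ.union Δ) Ψ (.pair t₁ t₂) (.prod A B)
    | appV {Γ Ψ ω t A B} :
        IsoTy Ψ ω A B → TermTy Γ Ψ t A → TermTy Γ Ψ (.app ω t) B
    | appC {Γ Ψ ω t A B} :
        IsoTy none ω A B → TermTy Γ Ψ t A → TermTy Γ Ψ (.app ω t) B
    | lett {Γ Δ Ξ Ψ p t₁ t₂ A B} :
        TermTy Γ Ψ t₁ A → PatTy p A Ξ → TermTy (Δ.union Ξ) Ψ t₂ B →
        Ctx.disj Γ Δ → Ctx.disj Δ Ξ →
        TermTy (Γ.union Δ) Ψ (.lett p t₁ t₂) B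

  /-- Typing of isos: `Ψ ⊢ ω : A ↔ B`. -/
  inductive IsoTy : IsoCtx → Iso → Ty → Ty → Prop
    | ivar (f : ℕ) (A B : Ty) : IsoTy (some (f, A, B)) (.ivar f) A B
    | fixI {f ω A B} (Ψ : IsoCtx) :
        IsoTy (some (f, A, B)) ω A B →
        (∀ l, ω = .clauses l → StructRecClauses f l A) →
        IsoTy Ψ (.fixI f ω) A B
    | clauses {Ψ l A B} (Γof : Val × Term → Ctx) :
        (∀ c ∈ Clauses.toList l, VTy (Γof c) c.1 A) →
        (∀ c ∈ Clauses.toList l, TermTy (Γof c) Ψ c.2 B) →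
        OD A {v | ∃ e, (v, e) ∈ Clauses.toList l} →
        OD B {w | ∃ c ∈ Clauses.toList l, Term.valOf c.2 = some w} →
        IsoTy Ψ (.clauses l) A B
end

/-! ## Explicit substitutions -/

/-- The substitution determined by an association list. -/
def Sub.ofList (L : List (ℕ × Val)) : Sub :=
  fun x => (L.find? (fun p => p.1 = x)).map Prod.snd

/-- `let σ in t` : a nested sequence of lets, one per binding. -/
def letSig (L : List (ℕ × Val)) (t : Term) : Term :=
  L.foldr (fun xv acc => .lett (.pvar xv.1) xv.2.toTerm acc) t

/-- The explicit let-propagation rules `→ₑₗₑₜ`. -/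
inductive ELet : Term → Term → Prop
  | letvar {x : ℕ} {v : Val} : ELet (.lett (.pvar x) v.toTerm (.var x)) v.toTerm
  | letpair {x : ℕ} {p : Pat} {t₁ t₂ t : Term} :
      ELet (.lett (.ppair (.pvar x) p) (.pair t₁ t₂) t)
           (.lett (.pvar x) t₁ (.lett p t₂ t))
  | pairL {x : ℕ} {v : Val} {t₁ t₂ : Term} : x ∈ t₁.fvT →
      ELet (.lett (.pvar x) v.toTerm (.pair t₁ t₂))
           (.pair (.lett (.pvar x) v.toTerm t₁) t₂)
  | pairR {x : ℕ} {v : Val} {t₁ t₂ : Term} : x ∈ t₂.fvT →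
      ELet (.lett (.pvar x) v.toTerm (.pair t₁ t₂))
           (.pair t₁ (.lett (.pvar x) v.toTerm t₂))
  | inl {x : ℕ} {v : Val} {t : Term} :
      ELet (.lett (.pvar x) v.toTerm (.inl t)) (.inl (.lett (.pvar x) v.toTerm t))
  | inr {x : ℕ} {v : Val} {t : Term} :
      ELet (.lett (.pvar x) v.toTerm (.inr t)) (.inr (.lett (.pvar x) v.toTerm t))
  | fold {x : ℕ} {v : Val} {t : Term} :
      ELet (.lett (.pvar x) v.toTerm (.fold t)) (.fold (.lett (.pvar x) v.toTerm t))
  | app {x : ℕ} {v : Val} {ω : Iso} {t : Term} :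
      ELet (.lett (.pvar x) v.toTerm (.app ω t)) (.app ω (.lett (.pvar x) v.toTerm t))

/-- The explicit-substitution reduction `→_{eβ}`. -/
inductive EBeta : Term → Term → Prop
  | elet {t t'} : ELet t t' → EBeta t t'
  | inlC {t t'} : EBeta t t' → EBeta (.inl t) (.inl t')
  | inrC {t t'} : EBeta t t' → EBeta (.inr t) (.inr t')
  | foldC {t t'} : EBeta t t' → EBeta (.fold t) (.fold t')
  | pairL {t t'} (v : Val) : EBeta t t' → EBeta (.pair t v.toTerm) (.pair t' v.toTerm)
  | pairR {t t'} (v : Val) : EBeta t t' → EBeta (.pair v.toTerm t) (.pair v.toTerm t')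
  | appC {ω t t'} : EBeta t t' → EBeta (.app ω t) (.app ω t')
  | lettC {p t₁ t₁' t₂} : EBeta t₁ t₁' → EBeta (.lett p t₁ t₂) (.lett p t₁' t₂)
  | isoRec {f ω t} :
      EBeta (.app (.fixI f ω) t) (.app (Iso.isoSub f (.fixI f ω) ω) t)
  | lettE {L : List (ℕ × Val)} {p : Pat} {v : Val} {t : Term} :
      Matches (Sub.ofList L) p.toVal v → EBeta (.lett p v.toTerm t) (letSig L t)
  | isoApp {L : List (ℕ × Val)} {l : Clauses} {vi : Val} {e : Term} {v : Val} :
      (vi, e) ∈ l.toList → Matches (Sub.ofList L) vi v →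
      EBeta (.app (.clauses l) v.toTerm) (letSig L e)

end LinRev
namespace LinRev

/-! ## Encoding of integers -/

/-- `npos = μX. 1 ⊕ X`, the type of strictly positive naturals. -/
def nposTy : Ty := .mu (.sum .one (.tvar 0))

/-- `Z = 1 ⊕ (npos ⊕ npos)`, the type of integers. -/
def ZTy : Ty := .sum .one (.sum nposTy nposTy)

/-- `enpos n` encodes the strictly positive natural `n+1 : npos`. -/
def enpos : ℕ → Val
  | 0 => .fold (.inl .unit)
  | n + 1 => .fold (.inr (enpos n))

/-- `encZ z` encodes the integer `z : Z`. -/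
def encZ (z : ℤ) : Val :=
  if 0 < z then .inr (.inl (enpos (z.natAbs - 1)))
  else if z = 0 then .inl .unit
  else .inr (.inr (enpos (z.natAbs - 1)))

/-- The successor iso on encoded integers. -/
def succIso : Iso := .clauses
  (.cons (.inl .unit) ((Val.inr (.inl (.fold (.inl .unit)))).toTerm)
  (.cons (.inr (.inl (.var 0))) ((Val.inr (.inl (.fold (.inr (.var 0))))).toTerm)
  (.cons (.inr (.inr (.fold (.inl .unit)))) ((Val.inl .unit).toTerm)
  (.cons (.inr (.inr (.fold (.inr (.var 0))))) ((Val.inr (.inr (.var 0))).toTerm)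
   .nil))))

end LinRev
namespace LinRev

/-! ## Translation of RPP into isos -/

/-- Right-nested tuple of values. -/
def tupleV : List Val → Val
  | [] => .unit
  | [v] => v
  | v :: vs => .pair v (tupleV vs)

/-- Right-nested tuple of types. -/
def tupleTy : List Ty → Ty
  | [] => .one
  | [A] => A
  | A :: As => .prod A (tupleTy As)

/-- Right-nested tuple pattern of variables. -/
def patOfVars : List ℕ → Pat
  | [] => .pvar 0
  | [x] => .pvar x
  | x :: xs => .ppair (.pvar x) (patOfVars xs)

/-- `Z^k`. -/
def Zpow (k : ℕ) : Ty := tupleTy (List.replicate k ZTy)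

/-- Tuple of variables `s, …, s+c-1`. -/
def vt (s c : ℕ) : Val := tupleV ((List.range' s c).map .var)

def pt' (s c : ℕ) : Pat := patOfVars (List.range' s c)

def idIso : Iso := .clauses (.cons (.var 0) (Term.var 0) .nil)

def swapIso : Iso :=
  .clauses (.cons (.pair (.var 0) (.var 1)) ((Val.pair (.var 1) (.var 0)).toTerm) .nil)

def signIso : Iso := .clauses
  (.cons (.inr (.inl (.var 0))) ((Val.inr (.inr (.var 0))).toTerm)
  (.cons (.inr (.inr (.var 0))) ((Val.inr (.inl (.var 0))).toTerm)
  (.cons (.inl .unit) ((Val.inl .unit).toTerm) .nil)))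

/-- Encoding of sequential composition `f ; g` at arity `n`. -/
def compIso (n : ℕ) (wf wg : Iso) : Iso :=
  .clauses (.cons (vt 0 n)
    (.lett (pt' n n) (.app wf (vt 0 n).toTerm)
      (.lett (pt' (2 * n) n) (.app wg (vt n n).toTerm)
        (vt (2 * n) n).toTerm)) .nil)

/-- Encoding of parallel composition `f ∥ g` at arities `j` and `l`. -/
def parIso (j l : ℕ) (wf wg : Iso) : Iso :=
  .clauses (.cons (vt 0 (j + l))
    (.lett (patOfVars (List.range' (j + l) j)) (.app wf (vt 0 j).toTerm)
      (.lett (patOfVars (List.range' (2 * j + l) l)) (.app wg (vt j l).toTerm)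
        (tupleV (((List.range' (j + l) j ++ List.range' (2 * j + l) l)).map .var)).toTerm))
    .nil)

/-- The auxiliary, structurally recursive iterating iso
`ω_aux : Z^k ⊗ npos ↔ Z^k ⊗ npos`. -/
def auxIt (k : ℕ) (wf : Iso) : Iso :=
  .fixI 0 (.clauses
    (.cons (tupleV (((List.range' 0 k).map Val.var) ++ [.fold (.inl .unit)]))
      (.lett (pt' k k) (.app wf (vt 0 k).toTerm)
        (tupleV (((List.range' k k).map Val.var) ++ [Val.fold (.inl .unit)])).toTerm)
    (.cons (tupleV (((List.range' 0 k).map Val.var) ++ [.fold (.inr (.var k))]))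
      (.lett (pt' (k + 1) k) (.app wf (vt 0 k).toTerm)
        (.lett (patOfVars (List.range' (2 * k + 1) k ++ [3 * k + 1]))
          (.app (.ivar 0)
            (tupleV (((List.range' (k + 1) k).map Val.var) ++ [Val.var k])).toTerm)
          (tupleV (((List.range' (2 * k + 1) k).map Val.var)
              ++ [Val.fold (.inr (.var (3 * k + 1)))])).toTerm))
      .nil)))

/-- Encoding of the finite iteration `It[f]`. -/
def itIso (k : ℕ) (wf : Iso) : Iso :=
  .clauses
    (.cons (tupleV (((List.range' 0 k).map Val.var) ++ [.inl .unit]))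
      (tupleV (((List.range' 0 k).map Val.var) ++ [Val.inl .unit])).toTerm
    (.cons (tupleV (((List.range' 0 k).map Val.var) ++ [.inr (.inl (.var k))]))
      (.lett (patOfVars (List.range' (k + 1) k ++ [2 * k + 1]))
        (.app (auxIt k wf) (tupleV (((List.range' 0 k).map Val.var) ++ [Val.var k])).toTerm)
        (tupleV (((List.range' (k + 1) k).map Val.var)
            ++ [Val.inr (.inl (.var (2 * k + 1)))])).toTerm)
    (.cons (tupleV (((List.range' 0 k).map Val.var) ++ [.inr (.inr (.var k))]))
      (.lett (patOfVars (List.range' (k + 1) k ++ [2 * k + 1]))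
        (.app (auxIt k wf) (tupleV (((List.range' 0 k).map Val.var) ++ [Val.var k])).toTerm)
        (tupleV (((List.range' (k + 1) k).map Val.var)
            ++ [Val.inr (.inr (.var (2 * k + 1)))])).toTerm)
      .nil)))

/-- Encoding of the selection `If[f,g,h]`. -/
def ifIso (k : ℕ) (wf wg wh : Iso) : Iso :=
  .clauses
    (.cons (tupleV (((List.range' 0 k).map Val.var) ++ [.inr (.inl (.var k))]))
      (.lett (pt' (k + 1) k) (.app wf (vt 0 k).toTerm)
        (tupleV (((List.range' (k + 1) k).map Val.var)
            ++ [Val.inr (.inl (.var k))])).toTerm)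
    (.cons (tupleV (((List.range' 0 k).map Val.var) ++ [.inl .unit]))
      (.lett (pt' (k + 1) k) (.app wg (vt 0 k).toTerm)
        (tupleV (((List.range' (k + 1) k).map Val.var) ++ [Val.inl .unit])).toTerm)
    (.cons (tupleV (((List.range' 0 k).map Val.var) ++ [.inr (.inr (.var k))]))
      (.lett (pt' (k + 1) k) (.app wh (vt 0 k).toTerm)
        (tupleV (((List.range' (k + 1) k).map Val.var)
            ++ [Val.inr (.inr (.var k))])).toTerm)
      .nil)))

/-- The translation `isos(·)` from RPP to isos of the reversible language. -/
def isosOf : ∀ {k : ℕ}, RPPx.RPP k → Iso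
  | _, .id => idIso
  | _, .suc => succIso
  | _, .pre => succIso.inv
  | _, .sign => signIso
  | _, .swap => swapIso
  | k, .comp f g => compIso k (isosOf f) (isosOf g)
  | _, @RPPx.RPP.par j l f g => parIso j l (isosOf f) (isosOf g)
  | _, @RPPx.RPP.it k f => itIso k (isosOf f)
  | _, @RPPx.RPP.ite k f g h => ifIso k (isosOf f) (isosOf g) (isosOf h)

/-- Encoding of a tuple of integers. -/
def encTup {k : ℕ} (v : Fin k → ℤ) : Val :=
  tupleV (List.ofFn fun i => encZ (v i))

end LinRev

/-!
Each composite RPP constructor is translated into an iso whose clause matches the encoded input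
against a tuple of variables and then runs a chain of `let`s, each applying a sub-iso to a block
of those variables. The translation numbers successive blocks disjointly, so every `let` step
instantiates exactly the block it binds and leaves the rest of the body untouched; the correctness
of each constructor is then the correctness of its sub-isos, threaded through the chain. For
`ω_aux` this is an induction on the counter: the clause for `fold (inl ())` applies `ω_f` once,
and the clause for `fold (inr n)` applies `ω_f`, unfolds the fixpoint and recurses on `n`, so
`f^(n+1) = f^n ∘ f`. The correctness of `ω_f` itself, i.e. of the whole translation `isosOf`,
follows by induction on the RPP term, its iteration case resting on the one for `ω_aux`.
-/

namespace LinRev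

@[simp] theorem Val.toTerm_applySub (v : Val) (σ : Sub) :
    v.toTerm.applySub σ = (v.applySub σ).toTerm := by
  induction v with
  | var x => simp only [Val.toTerm, Term.applySub, Val.applySub]; cases σ x <;> rfl
  | _ => simp_all [Val.toTerm, Term.applySub, Val.applySub]

@[simp] theorem Val.isoSub_toTerm (f : ℕ) (w : Iso) (v : Val) :
    Term.isoSub f w v.toTerm = v.toTerm := by
  induction v <;> simp_all [Val.toTerm, Term.isoSub]

theorem tupleV_cons_of_ne_nil (v : Val) {vs : List Val} (h : vs ≠ []) :
    tupleV (v :: vs) = .pair v (tupleV vs) := by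
  cases vs
  · contradiction
  · rfl

@[simp] theorem applySub_tupleV (vs : List Val) (σ : Sub) :
    (tupleV vs).applySub σ = tupleV (vs.map (Val.applySub σ)) := by
  induction vs with
  | nil => rfl
  | cons v vs ih => cases vs <;> simp_all [tupleV, Val.applySub]

@[simp] theorem applySub_enpos (n : ℕ) (σ : Sub) : (enpos n).applySub σ = enpos n := by
  induction n <;> simp_all [enpos, Val.applySub]

@[simp] theorem applySub_encZ (z : ℤ) (σ : Sub) : (encZ z).applySub σ = encZ z := by
  unfold encZ; split_ifs <;> simp [Val.applySub]

@[simp] theorem map_applySub_ofFn_encZ {k : ℕ} (x : Fin k → ℤ) (σ : Sub) :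
    (List.ofFn fun i => encZ (x i)).map (Val.applySub σ) = List.ofFn fun i => encZ (x i) := by
  simp [List.map_ofFn, Function.comp_def]

theorem map_var_applySub_of_getElem? {σ : Sub} {s n : ℕ} {vs : List Val} (hn : vs.length = n)
    (h : ∀ i < n, σ (s + i) = vs[i]?) : ((List.range' s n).map .var).map (Val.applySub σ) = vs := by
  subst hn
  refine List.ext_getElem (by simp) fun i h₁ h₂ => ?_
  simp [Val.applySub, h i h₂, h₂]

theorem map_var_applySub_of_eq_none {σ : Sub} {s n : ℕ} (h : ∀ i < n, σ (s + i) = none) :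
    ((List.range' s n).map .var).map (Val.applySub σ) = (List.range' s n).map .var := by
  refine List.ext_getElem (by simp) fun i h₁ h₂ => ?_
  simp at h₂
  simp [Val.applySub, h i h₂]

def Sub.window (s : ℕ) (vs : List Val) : Sub := fun y => if s ≤ y then vs[y - s]? else none

@[simp] theorem Sub.window_add (s i : ℕ) (vs : List Val) : Sub.window s vs (s + i) = vs[i]? := by
  simp [Sub.window]

theorem Sub.window_eq_none {s y : ℕ} {vs : List Val} (h : y < s ∨ s + vs.length ≤ y) :
    Sub.window s vs y = none := by
  unfold Sub.window; split_ifs <;> simp; omega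

theorem map_var_applySub_window {s n : ℕ} {vs : List Val} (hn : vs.length = n) :
    ((List.range' s n).map .var).map (Val.applySub (Sub.window s vs)) = vs :=
  map_var_applySub_of_getElem? hn fun i _ => Sub.window_add s i vs

theorem map_var_applySub_window_of_le {s t n : ℕ} {vs : List Val} (h : s + vs.length ≤ t) :
    ((List.range' t n).map .var).map (Val.applySub (Sub.window s vs)) =
      (List.range' t n).map .var :=
  map_var_applySub_of_eq_none fun _ _ => Sub.window_eq_none (.inr (by omega))

theorem map_var_applySub_window_append_left {s n : ℕ} {vs ws : List Val} (hn : vs.length = n) :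
    ((List.range' s n).map .var).map (Val.applySub (Sub.window s (vs ++ ws))) = vs :=
  map_var_applySub_of_getElem? hn fun i hi => by
    rw [Sub.window_add, List.getElem?_append_left (by omega)]

theorem map_var_applySub_window_append_right {s t n : ℕ} {vs ws : List Val}
    (ht : s + vs.length = t) (hn : ws.length = n) :
    ((List.range' t n).map .var).map (Val.applySub (Sub.window s (vs ++ ws))) = ws :=
  map_var_applySub_of_getElem? hn fun i hi => by
    rw [← ht, Nat.add_assoc, Sub.window_add, List.getElem?_append_right (by omega)]; simp

theorem Sub.window_append_singleton {s t : ℕ} {vs : List Val} {v : Val} (ht : s + vs.length = t) :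
    Sub.window s (vs ++ [v]) t = some v := by
  subst ht; simp

theorem Sub.window_nil (s : ℕ) : Sub.window s [] = fun _ => none := by
  funext y; simp [Sub.window]

theorem Sub.window_singleton (x : ℕ) (v : Val) :
    Sub.window x [v] = fun y => if y = x then some v else none := by
  funext y
  rcases Nat.lt_trichotomy y x with h | rfl | h
  · simp [Sub.window, show ¬ x ≤ y by omega, h.ne]
  · simp [Sub.window]
  · simp [Sub.window, h.le, h.ne', show y - x ≠ 0 by omega]

theorem Sub.window_cons (s : ℕ) (v : Val) (vs : List Val) :
    Sub.window s (v :: vs) = (Sub.window s [v]).union (Sub.window (s + 1) vs) := by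
  funext y
  rcases Nat.lt_or_ge y s with h | h
  · simp [Sub.window, Sub.union, show ¬ s ≤ y by omega, show ¬ s + 1 ≤ y by omega]
  · obtain ⟨_ | i, rfl⟩ := Nat.exists_eq_add_of_le h
    · simp [Sub.window, Sub.union]
    · simp [Sub.window, Sub.union, show s + (i + 1) - (s + 1) = i by omega]

theorem Matches.var_window (x : ℕ) (v : Val) : Matches (Sub.window x [v]) (.var x) v :=
  Sub.window_singleton x v ▸ Matches.var x v

theorem Matches.window_nil {p v : Val} (h : Matches (fun _ => none) p v) (s : ℕ) :
    Matches (Sub.window s []) p v :=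
  Sub.window_nil s ▸ h

theorem Matches.vars_append {s t n : ℕ} {vs ws : List Val} {tp tv : Val} (ht : s + n = t)
    (hn : vs.length = n) (h : Matches (Sub.window t ws) tp tv) :
    Matches (Sub.window s (vs ++ ws)) (tupleV ((List.range' s n).map .var ++ [tp]))
      (tupleV (vs ++ [tv])) := by
  subst hn ht
  induction vs generalizing s with
  | nil => simpa [tupleV] using h
  | cons v vs ih =>
    simp only [List.length_cons, List.range'_succ, List.map_cons, List.cons_append]
    rw [tupleV_cons_of_ne_nil _ (by simp), tupleV_cons_of_ne_nil _ (by simp), Sub.window_cons]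
    refine .pair (.var_window s v) (ih (by simpa [Nat.add_assoc, Nat.add_comm 1] using h))
      fun y => ?_
    rcases Nat.lt_or_ge s y with hy | hy
    · exact .inl (Sub.window_eq_none (.inr (by simpa using hy)))
    · exact .inr (Sub.window_eq_none (.inl (by omega)))

theorem Matches.vars (s : ℕ) {n : ℕ} {vs : List Val} (hn : vs.length = n) :
    Matches (Sub.window s vs) (tupleV ((List.range' s n).map .var)) (tupleV vs) := by
  subst hn
  rcases vs.eq_nil_or_concat with rfl | ⟨us, u, rfl⟩
  · exact Sub.window_nil s ▸ Matches.unit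
  · simpa [List.range'_concat] using Matches.vars_append (vs := us) rfl rfl (.var_window _ u)

/-- `patOfVars []` is the variable pattern `0`, so matching it against `()` binds `0`. -/
def Sub.patWindow (s : ℕ) (vs : List Val) : Sub :=
  if vs = [] then Sub.window 0 [.unit] else Sub.window s vs

theorem Sub.patWindow_of_ne_nil {s : ℕ} {vs : List Val} (h : vs ≠ []) :
    Sub.patWindow s vs = Sub.window s vs :=
  if_neg h

theorem Sub.patWindow_add {s i : ℕ} {vs : List Val} (h : i < vs.length) :
    Sub.patWindow s vs (s + i) = vs[i]? := by
  rw [Sub.patWindow, if_neg (List.ne_nil_of_length_pos (by omega)), Sub.window_add]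

theorem Sub.patWindow_eq_none {s y : ℕ} {vs : List Val} (h₀ : 0 < y) (h : s + vs.length ≤ y) :
    Sub.patWindow s vs y = none := by
  unfold Sub.patWindow; split_ifs
  · exact Sub.window_eq_none (.inr (by simpa))
  · exact Sub.window_eq_none (.inr h)

theorem map_var_applySub_patWindow {s n : ℕ} {vs : List Val} (hn : vs.length = n) :
    ((List.range' s n).map .var).map (Val.applySub (Sub.patWindow s vs)) = vs :=
  map_var_applySub_of_getElem? hn fun _ hi => Sub.patWindow_add (by omega)

theorem map_var_applySub_patWindow_of_le {s t n : ℕ} {vs : List Val} (h : s + vs.length ≤ t)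
    (h₀ : 0 < t ∨ n = 0) :
    ((List.range' t n).map .var).map (Val.applySub (Sub.patWindow s vs)) =
      (List.range' t n).map .var :=
  map_var_applySub_of_eq_none fun _ _ => Sub.patWindow_eq_none (by omega) (by omega)

theorem patOfVars_toVal {xs : List ℕ} (h : xs ≠ []) :
    (patOfVars xs).toVal = tupleV (xs.map .var) := by
  induction xs with
  | nil => contradiction
  | cons x xs ih => cases xs <;> simp_all [patOfVars, Pat.toVal, tupleV]

theorem Matches.patOfVars (s : ℕ) {n : ℕ} {vs : List Val} (hn : vs.length = n) :
    Matches (Sub.patWindow s vs) (patOfVars (List.range' s n)).toVal (tupleV vs) := by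
  subst hn
  unfold Sub.patWindow; split_ifs with h
  · subst h; exact .var_window 0 .unit
  · rw [patOfVars_toVal (by simpa using h)]; exact .vars s rfl

theorem Steps.lett_of_steps {p : Pat} {t body : Term} {w : Val} {σ : Sub} (h : Steps t w.toTerm)
    (hm : Matches σ p.toVal w) : Steps (.lett p t body) (body.applySub σ) :=
  (Relation.ReflTransGen.lift (fun t => Term.lett p t body) (fun _ _ => Step.lettC) _ _ h).tail
    (Step.lettE hm)

theorem Steps.of_clause_eq {l : Clauses} {vi v : Val} {e r : Term} {σ : Sub}
    (hmem : (vi, e) ∈ l.toList) (hm : Matches σ vi v) (h : e.applySub σ = r) :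
    Steps (.app (.clauses l) v.toTerm) r :=
  .single (h ▸ Step.isoApp hmem hm)

theorem Steps.of_clause {l : Clauses} {vi v : Val} {e r : Term} {σ : Sub}
    (hmem : (vi, e) ∈ l.toList) (hm : Matches σ vi v) (h : Steps (e.applySub σ) r) :
    Steps (.app (.clauses l) v.toTerm) r :=
  .head (Step.isoApp hmem hm) h

theorem Clauses.mem_toList_isoSub {f : ℕ} {w : Iso} {vi : Val} {e : Term} :
    ∀ {l : Clauses}, (vi, e) ∈ l.toList → (vi, Term.isoSub f w e) ∈ (Clauses.isoSub f w l).toList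
  | .nil, h => by simp [Clauses.toList] at h
  | .cons vi' e' r, h => by
    simp only [Clauses.toList, Clauses.isoSub, List.mem_cons, Prod.mk.injEq] at h ⊢
    rcases h with ⟨rfl, rfl⟩ | h
    · exact .inl ⟨rfl, rfl⟩
    · exact .inr (mem_toList_isoSub h)

theorem Steps.of_fixI_clause {ω : Iso} {f : ℕ} {l : Clauses} {vi v : Val} {e r : Term} {σ : Sub}
    (hω : ω = .fixI f (.clauses l)) (hmem : (vi, e) ∈ l.toList) (hm : Matches σ vi v)
    (h : Steps ((Term.isoSub f ω e).applySub σ) r) : Steps (.app ω v.toTerm) r := by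
  subst hω
  refine .head .isoRec ?_
  rw [Iso.isoSub]
  exact Steps.of_clause (Clauses.mem_toList_isoSub hmem) hm h

@[simp] theorem encZ_ofNat_succ (n : ℕ) : encZ (.ofNat (n + 1)) = .inr (.inl (enpos n)) := by
  simp [encZ, show ((n : ℤ) + 1).natAbs = n + 1 by omega]

@[simp] theorem encZ_negSucc (n : ℕ) : encZ (.negSucc n) = .inr (.inr (enpos n)) := by
  simp [encZ]

@[simp] theorem Term.asVal_toTerm (v : Val) : v.toTerm.asVal = some v := by
  induction v <;> simp_all [Val.toTerm, Term.asVal]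

theorem invAux_toTerm (acc : Term) (v : Val) : invAux acc v.toTerm = some (v, acc) := by
  cases v <;> simp [Val.toTerm, invAux, Term.asVal]

theorem succIso_inv : succIso.inv = .clauses
    (.cons (.inr (.inl (.fold (.inl .unit)))) (Val.inl .unit).toTerm
    (.cons (.inr (.inl (.fold (.inr (.var 0))))) (Val.inr (.inl (.var 0))).toTerm
    (.cons (.inl .unit) (Val.inr (.inr (.fold (.inl .unit)))).toTerm
    (.cons (.inr (.inr (.var 0))) (Val.inr (.inr (.fold (.inr (.var 0))))).toTerm .nil)))) := by
  simp only [succIso, Iso.inv, Clauses.inv, invAux_toTerm]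

theorem steps_succIso (z : ℤ) : Steps (.app succIso (encZ z).toTerm) (encZ (z + 1)).toTerm := by
  rcases z with (_ | n) | (_ | n)
  · exact .of_clause_eq (.head _) (.inl .unit) rfl
  · rw [show Int.ofNat (n + 1) + 1 = .ofNat (n + 1 + 1) from rfl, encZ_ofNat_succ,
      encZ_ofNat_succ]
    exact .of_clause_eq (.tail _ (.head _)) (.inr (.inl (.var 0 _))) rfl
  · exact .of_clause_eq (.tail _ (.tail _ (.head _))) (.inr (.inr (.fold (.inl .unit)))) rfl
  · rw [show Int.negSucc (n + 1) + 1 = .negSucc n from rfl, encZ_negSucc, encZ_negSucc]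
    exact .of_clause_eq (.tail _ (.tail _ (.tail _ (.head _))))
      (.inr (.inr (.fold (.inr (.var 0 _))))) rfl

theorem steps_succIso_inv (z : ℤ) :
    Steps (.app succIso.inv (encZ z).toTerm) (encZ (z - 1)).toTerm := by
  rw [succIso_inv]
  rcases z with (_ | _ | n) | n
  · exact .of_clause_eq (.tail _ (.tail _ (.head _))) (.inl .unit) rfl
  · exact .of_clause_eq (.head _) (.inr (.inl (.fold (.inl .unit)))) rfl
  · rw [show Int.ofNat (n + 1 + 1) - 1 = .ofNat (n + 1) by simp, encZ_ofNat_succ,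
      encZ_ofNat_succ]
    exact .of_clause_eq (.tail _ (.head _)) (.inr (.inl (.fold (.inr (.var 0 _))))) rfl
  · rw [show Int.negSucc n - 1 = .negSucc (n + 1) from rfl, encZ_negSucc, encZ_negSucc]
    exact .of_clause_eq (.tail _ (.tail _ (.tail _ (.head _)))) (.inr (.inr (.var 0 _))) rfl

theorem steps_signIso (z : ℤ) : Steps (.app signIso (encZ z).toTerm) (encZ (-z)).toTerm := by
  rcases z with (_ | n) | n
  · exact .of_clause_eq (.tail _ (.tail _ (.head _))) (.inl .unit) rfl
  · rw [show -Int.ofNat (n + 1) = .negSucc n from rfl, encZ_ofNat_succ, encZ_negSucc]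
    exact .of_clause_eq (.head _) (.inr (.inl (.var 0 _))) rfl
  · rw [show -Int.negSucc n = .ofNat (n + 1) from rfl, encZ_ofNat_succ, encZ_negSucc]
    exact .of_clause_eq (.tail _ (.head _)) (.inr (.inr (.var 0 _))) rfl

theorem steps_idIso (v : Val) : Steps (.app idIso v.toTerm) v.toTerm :=
  .of_clause_eq (.head _) (.var 0 v) rfl

theorem steps_swapIso (v w : Val) :
    Steps (.app swapIso (Val.pair v w).toTerm) (Val.pair w v).toTerm :=
  .of_clause_eq (.head _) (.pair (.var 0 v) (.var 1 w) fun y => by by_cases y = 0 <;> simp_all) rfl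

def Iso.Computes {k : ℕ} (ω : Iso) (g : (Fin k → ℤ) → Fin k → ℤ) : Prop :=
  ∀ x, Steps (.app ω (encTup x).toTerm) (encTup (g x)).toTerm

theorem Iso.Computes.compIso {n : ℕ} {wf wg : Iso} {f g : (Fin n → ℤ) → Fin n → ℤ}
    (hf : wf.Computes f) (hg : wg.Computes g) : (LinRev.compIso n wf wg).Computes (g ∘ f) := by
  intro x
  refine .of_clause (.head _) (.vars 0 List.length_ofFn) ?_
  simp only [Term.applySub, vt, Val.toTerm_applySub, applySub_tupleV]
  rw [map_var_applySub_window List.length_ofFn, map_var_applySub_window_of_le (by simp),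
    map_var_applySub_window_of_le (by simp only [List.length_ofFn]; omega)]
  refine (Steps.lett_of_steps (hf x) (.patOfVars n List.length_ofFn)).trans ?_
  simp only [Term.applySub, Val.toTerm_applySub, applySub_tupleV]
  rw [map_var_applySub_patWindow List.length_ofFn,
    map_var_applySub_patWindow_of_le (by simp only [List.length_ofFn]; omega) (by omega)]
  refine (Steps.lett_of_steps (hg (f x)) (.patOfVars (2 * n) List.length_ofFn)).trans ?_
  simp only [Val.toTerm_applySub, applySub_tupleV]
  rw [map_var_applySub_patWindow List.length_ofFn]
  rfl

theorem ofFn_encZ_append {j l : ℕ} (a : Fin j → ℤ) (b : Fin l → ℤ) :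
    (List.ofFn fun i => encZ (Fin.append a b i)) =
      (List.ofFn fun i => encZ (a i)) ++ List.ofFn fun i => encZ (b i) := by
  rw [List.ofFn_add]; simp

theorem Iso.Computes.parIso {j l : ℕ} {wf wg : Iso} {f : (Fin j → ℤ) → Fin j → ℤ}
    {g : (Fin l → ℤ) → Fin l → ℤ} (hf : wf.Computes f) (hg : wg.Computes g) :
    (LinRev.parIso j l wf wg).Computes
      fun x => Fin.append (f (x ∘ Fin.castAdd l)) (g (x ∘ Fin.natAdd j)) := by
  intro x
  obtain ⟨a, b, rfl⟩ : ∃ a b, x = Fin.append a b := ⟨_, _, Fin.append_castAdd_natAdd.symm⟩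
  have hl : ((List.ofFn fun i => encZ (a i)) ++ List.ofFn fun i => encZ (b i)).length = j + l := by
    simp
  simp only [encTup, ofFn_encZ_append,
    show Fin.append a b ∘ Fin.castAdd l = a from funext (Fin.append_left a b),
    show Fin.append a b ∘ Fin.natAdd j = b from funext (Fin.append_right a b)]
  refine .of_clause (.head _) (.vars 0 hl) ?_
  simp only [Term.applySub, vt, Val.toTerm_applySub, applySub_tupleV, List.map_append]
  rw [map_var_applySub_window_append_left List.length_ofFn,
    map_var_applySub_window_append_right (by simp) List.length_ofFn,
    map_var_applySub_window_of_le (by simp), map_var_applySub_window_of_le (by simp; omega)]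
  refine (Steps.lett_of_steps (hf a) (.patOfVars (j + l) List.length_ofFn)).trans ?_
  simp only [Term.applySub, Val.toTerm_applySub, applySub_tupleV, List.map_append]
  rw [map_var_applySub_patWindow List.length_ofFn,
    map_var_applySub_patWindow_of_le (by simp; omega) (by omega), map_applySub_ofFn_encZ]
  refine (Steps.lett_of_steps (hg b) (.patOfVars (2 * j + l) List.length_ofFn)).trans ?_
  simp only [Val.toTerm_applySub, applySub_tupleV, List.map_append, map_applySub_ofFn_encZ]
  rw [map_var_applySub_patWindow List.length_ofFn]

theorem steps_auxIt_zero {k : ℕ} {wf : Iso} {g : (Fin k → ℤ) → Fin k → ℤ}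
    (hw : Iso.isoSub 0 (auxIt k wf) wf = wf) (hg : wf.Computes g) (x : Fin k → ℤ) :
    Steps (.app (auxIt k wf) (tupleV ((List.ofFn fun i => encZ (x i)) ++ [enpos 0])).toTerm)
      (tupleV ((List.ofFn fun i => encZ (g x i)) ++ [enpos 0])).toTerm := by
  refine .of_fixI_clause rfl (.head _)
    (.vars_append (Nat.zero_add k) List.length_ofFn (.window_nil (.fold (.inl .unit)) _)) ?_
  simp only [Term.isoSub, Val.isoSub_toTerm, hw, Term.applySub, vt, Val.toTerm_applySub,
    applySub_tupleV, List.map_append]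
  rw [map_var_applySub_window_append_left List.length_ofFn, map_var_applySub_window_of_le (by simp)]
  refine (Steps.lett_of_steps (hg x) (.patOfVars k List.length_ofFn)).trans ?_
  simp only [Val.toTerm_applySub, applySub_tupleV, List.map_append]
  rw [map_var_applySub_patWindow List.length_ofFn]
  rfl

theorem steps_auxIt_succ {k : ℕ} {wf : Iso} {g : (Fin k → ℤ) → Fin k → ℤ}
    (hw : Iso.isoSub 0 (auxIt k wf) wf = wf) (hg : wf.Computes g) {m : ℕ}
    (ih : ∀ x : Fin k → ℤ,
      Steps (.app (auxIt k wf) (tupleV ((List.ofFn fun i => encZ (x i)) ++ [enpos m])).toTerm)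
        (tupleV ((List.ofFn fun i => encZ ((g^[m + 1] x) i)) ++ [enpos m])).toTerm)
    (x : Fin k → ℤ) :
    Steps (.app (auxIt k wf) (tupleV ((List.ofFn fun i => encZ (x i)) ++ [enpos (m + 1)])).toTerm)
      (tupleV ((List.ofFn fun i => encZ ((g^[m + 1] (g x)) i)) ++ [enpos (m + 1)])).toTerm := by
  refine .of_fixI_clause rfl (.tail _ (.head _))
    (.vars_append (Nat.zero_add k) List.length_ofFn (.fold (.inr (.var_window _ _)))) ?_
  simp only [Term.isoSub, Iso.isoSub, Val.isoSub_toTerm, hw, Term.applySub, vt,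
    Val.toTerm_applySub, applySub_tupleV, List.map_append, if_true]
  rw [map_var_applySub_window_append_left List.length_ofFn, map_var_applySub_window_of_le (by simp),
    map_var_applySub_window_of_le (by simp; omega)]
  simp only [List.map_cons, List.map_nil, Val.applySub]
  rw [Sub.window_append_singleton (by simp), Sub.window_eq_none (.inr (by simp; omega))]
  simp only [Option.getD_some, Option.getD_none]
  refine (Steps.lett_of_steps (hg x) (.patOfVars (k + 1) List.length_ofFn)).trans ?_
  simp only [Term.applySub, Val.toTerm_applySub, applySub_tupleV, List.map_append, List.map_cons,
    List.map_nil, Val.applySub, applySub_enpos]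
  rw [map_var_applySub_patWindow List.length_ofFn,
    map_var_applySub_patWindow_of_le (by simp; omega) (by omega),
    Sub.patWindow_eq_none (by omega) (by simp; omega)]
  simp only [Option.getD_none]
  rw [show List.range' (2 * k + 1) k ++ [3 * k + 1] = List.range' (2 * k + 1) (k + 1) by
    rw [List.range'_concat]; congr 2; omega]
  refine (Steps.lett_of_steps (ih (g x)) (.patOfVars (2 * k + 1) (by simp))).trans ?_
  rw [Sub.patWindow_of_ne_nil (by simp)]
  simp only [Val.toTerm_applySub, applySub_tupleV, List.map_append, List.map_cons, List.map_nil,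
    Val.applySub]
  rw [map_var_applySub_window_append_left List.length_ofFn,
    Sub.window_append_singleton (by simp; omega)]
  rfl

theorem steps_auxIt {k : ℕ} {wf : Iso} {g : (Fin k → ℤ) → Fin k → ℤ}
    (hw : Iso.isoSub 0 (auxIt k wf) wf = wf) (hg : wf.Computes g) (m : ℕ) (x : Fin k → ℤ) :
    Steps (.app (auxIt k wf) (tupleV ((List.ofFn fun i => encZ (x i)) ++ [enpos m])).toTerm)
      (tupleV ((List.ofFn fun i => encZ ((g^[m + 1] x) i)) ++ [enpos m])).toTerm := by
  induction m generalizing x with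
  | zero => exact steps_auxIt_zero hw hg x
  | succ m ih => exact steps_auxIt_succ hw hg ih x

theorem ofFn_encZ_snoc {k : ℕ} (y : Fin k → ℤ) (z : ℤ) :
    (List.ofFn fun i => encZ (Fin.snoc (α := fun _ => ℤ) y z i)) =
      (List.ofFn fun i => encZ (y i)) ++ [encZ z] := by
  rw [List.ofFn_succ']; simp

theorem steps_itIso_clause {k : ℕ} {wf : Iso} {g : (Fin k → ℤ) → Fin k → ℤ} {l : Clauses}
    {c : Val → Val} (hc : ∀ σ u, (c u).applySub σ = c (u.applySub σ))
    (hcm : ∀ {σ p v}, Matches σ p v → Matches σ (c p) (c v))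
    (hmem : (tupleV ((List.range' 0 k).map .var ++ [c (.var k)]),
      Term.lett (patOfVars (List.range' (k + 1) k ++ [2 * k + 1]))
        (.app (auxIt k wf) (tupleV ((List.range' 0 k).map .var ++ [.var k])).toTerm)
        (tupleV ((List.range' (k + 1) k).map .var ++ [c (.var (2 * k + 1))])).toTerm) ∈ l.toList)
    (hw : Iso.isoSub 0 (auxIt k wf) wf = wf) (hg : wf.Computes g) (n : ℕ) (y : Fin k → ℤ) :
    Steps (.app (.clauses l) (tupleV ((List.ofFn fun i => encZ (y i)) ++ [c (enpos n)])).toTerm)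
      (tupleV ((List.ofFn fun i => encZ ((g^[n + 1] y) i)) ++ [c (enpos n)])).toTerm := by
  refine .of_clause hmem
    (.vars_append (Nat.zero_add k) List.length_ofFn (hcm (.var_window _ _))) ?_
  simp only [Term.applySub, Val.toTerm_applySub, applySub_tupleV, List.map_append,
    List.map_cons, List.map_nil, hc, Val.applySub]
  rw [map_var_applySub_window_append_left List.length_ofFn, map_var_applySub_window_of_le (by simp),
    Sub.window_append_singleton (by simp), Sub.window_eq_none (.inr (by simp; omega))]
  simp only [Option.getD_some, Option.getD_none]
  rw [show List.range' (k + 1) k ++ [2 * k + 1] = List.range' (k + 1) (k + 1) by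
    rw [List.range'_concat]; congr 2; omega]
  refine (Steps.lett_of_steps (steps_auxIt hw hg n y) (.patOfVars (k + 1) (by simp))).trans ?_
  rw [Sub.patWindow_of_ne_nil (by simp)]
  simp only [Val.toTerm_applySub, applySub_tupleV, List.map_append, List.map_cons, List.map_nil,
    hc, Val.applySub]
  rw [map_var_applySub_window_append_left List.length_ofFn,
    Sub.window_append_singleton (by simp; omega)]
  rfl

theorem Iso.Computes.itIso {k : ℕ} {wf : Iso} {g : (Fin k → ℤ) → Fin k → ℤ}
    (hw : Iso.isoSub 0 (auxIt k wf) wf = wf) (hg : wf.Computes g) :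
    (LinRev.itIso k wf).Computes
      fun x => Fin.snoc (g^[(x (Fin.last k)).natAbs] (Fin.init x)) (x (Fin.last k)) := by
  intro x
  obtain ⟨y, z, rfl⟩ : ∃ y z, x = Fin.snoc y z := ⟨_, _, (Fin.snoc_init_self x).symm⟩
  simp only [Fin.init_snoc, Fin.snoc_last, encTup, ofFn_encZ_snoc]
  rcases z with (_ | n) | n
  · refine .of_clause (.head _) (.vars_append (Nat.zero_add k) List.length_ofFn
      (.window_nil (.inl .unit) _)) ?_
    simp only [Val.toTerm_applySub, applySub_tupleV, List.map_append, List.map_cons, List.map_nil,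
      Val.applySub]
    rw [map_var_applySub_window_append_left List.length_ofFn]
    exact .refl
  · rw [encZ_ofNat_succ]
    exact steps_itIso_clause (c := fun u => .inr (.inl u)) (fun _ _ => rfl) (.inr ∘ .inl)
      (.tail _ (.head _)) hw hg n y
  · rw [encZ_negSucc, Int.natAbs_negSucc]
    exact steps_itIso_clause (c := fun u => .inr (.inr u)) (fun _ _ => rfl) (.inr ∘ .inr)
      (.tail _ (.tail _ (.head _))) hw hg n y

theorem steps_ifIso_clause {k : ℕ} {ω : Iso} {g : (Fin k → ℤ) → Fin k → ℤ} {l : Clauses}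
    {tp : Val} {ws : List Val} {z : ℤ} (y : Fin k → ℤ) (hg : ω.Computes g)
    (hmem : (tupleV ((List.range' 0 k).map .var ++ [tp]),
      Term.lett (pt' (k + 1) k) (.app ω (vt 0 k).toTerm)
        (tupleV ((List.range' (k + 1) k).map .var ++ [tp])).toTerm) ∈ l.toList)
    (hm : Matches (Sub.window k ws) tp (encZ z)) (hws : ws.length ≤ 1)
    (htp : tp.applySub (Sub.window 0 ((List.ofFn fun i => encZ (y i)) ++ ws)) = encZ z) :
    Steps (.app (.clauses l) (tupleV ((List.ofFn fun i => encZ (y i)) ++ [encZ z])).toTerm)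
      (tupleV ((List.ofFn fun i => encZ (g y i)) ++ [encZ z])).toTerm := by
  refine .of_clause hmem (.vars_append (Nat.zero_add k) List.length_ofFn hm) ?_
  simp only [Term.applySub, vt, Val.toTerm_applySub, applySub_tupleV, List.map_append,
    List.map_cons, List.map_nil, htp]
  rw [map_var_applySub_window_append_left List.length_ofFn,
    map_var_applySub_window_of_le (by simp; omega)]
  refine (Steps.lett_of_steps (hg y) (.patOfVars (k + 1) List.length_ofFn)).trans ?_
  simp only [Val.toTerm_applySub, applySub_tupleV, List.map_append, List.map_cons, List.map_nil,
    applySub_encZ]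
  rw [map_var_applySub_patWindow List.length_ofFn]

theorem Iso.Computes.ifIso {k : ℕ} {wf wg wh : Iso} {f g h : (Fin k → ℤ) → Fin k → ℤ}
    (hf : wf.Computes f) (hg : wg.Computes g) (hh : wh.Computes h) :
    (LinRev.ifIso k wf wg wh).Computes fun x => Fin.snoc
      ((if 0 < x (Fin.last k) then f else if x (Fin.last k) = 0 then g else h) (Fin.init x))
      (x (Fin.last k)) := by
  intro x
  obtain ⟨y, z, rfl⟩ : ∃ y z, x = Fin.snoc y z := ⟨_, _, (Fin.snoc_init_self x).symm⟩
  simp only [Fin.init_snoc, Fin.snoc_last, encTup, ofFn_encZ_snoc]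
  rcases z with (_ | n) | n
  · rw [show Int.ofNat 0 = 0 from rfl, if_neg (lt_irrefl 0), if_pos rfl]
    exact steps_ifIso_clause y hg (.tail _ (.head _)) (.window_nil (.inl .unit) _) (by simp) rfl
  · rw [if_pos (by simp)]
    exact steps_ifIso_clause y hf (.head _)
      (by rw [encZ_ofNat_succ]; exact .inr (.inl (.var_window _ _)))
      (by simp) (by rw [encZ_ofNat_succ]; simp [Val.applySub, Sub.window_append_singleton])
  · rw [if_neg (by simp), if_neg (Int.negSucc_ne_zero n)]
    exact steps_ifIso_clause y hh (.tail _ (.tail _ (.head _)))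
      (by rw [encZ_negSucc]; exact .inr (.inr (.var_window _ _))) (by simp)
      (by simp [Val.applySub, Sub.window_append_singleton])

theorem isoSub_isosOf {k : ℕ} (g : RPPx.RPP k) (f : ℕ) (w : Iso) :
    Iso.isoSub f w (isosOf g) = isosOf g := by
  induction g with
  | pre => simp [isosOf, succIso_inv, Iso.isoSub, Clauses.isoSub]
  | it a ih =>
    by_cases hf : f = 0
    · subst hf; simp [isosOf, itIso, auxIt, Iso.isoSub, Clauses.isoSub, Term.isoSub]
    · simp [isosOf, itIso, auxIt, Iso.isoSub, Clauses.isoSub, Term.isoSub, Ne.symm hf, ih]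
  | _ => simp_all [isosOf, idIso, succIso, signIso, swapIso, compIso, parIso, ifIso, Iso.isoSub,
      Clauses.isoSub, Term.isoSub]

theorem encTup_fin_one (x : Fin 1 → ℤ) : encTup x = encZ (x 0) := by
  simp [encTup, tupleV]

theorem encTup_fin_two (x : Fin 2 → ℤ) : encTup x = .pair (encZ (x 0)) (encZ (x 1)) := by
  simp [encTup, List.ofFn_succ, tupleV]

theorem isosOf_computes {k : ℕ} (f : RPPx.RPP k) : (isosOf f).Computes (RPPx.eval f) := by
  induction f with
  | id => exact fun x => steps_idIso _
  | suc => exact fun x => by simpa [isosOf, encTup_fin_one, RPPx.eval] using steps_succIso (x 0)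
  | pre =>
    exact fun x => by simpa [isosOf, encTup_fin_one, RPPx.eval] using steps_succIso_inv (x 0)
  | sign => exact fun x => by simpa [isosOf, encTup_fin_one, RPPx.eval] using steps_signIso (x 0)
  | swap => exact fun x => by simpa [isosOf, encTup_fin_two, RPPx.eval] using steps_swapIso _ _
  | comp f g hf hg => exact hf.compIso hg
  | par f g hf hg => exact hf.parIso hg
  | it f hf => exact .itIso (isoSub_isosOf f 0 _) hf
  | ite f g h hf hg hh => exact .ifIso hf hg hh

end LinRev

open LinRev in
/-- The auxiliary iteration iso is correct: for `f ∈ RPP^k`,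
`ω_aux (x̄⃗, n̲) →* (z̄⃗, n̲)` where `z⃗ = f^n(x⃗)` and `n̲ = enpos m` encodes the
strictly positive natural `n = m+1`. -/
theorem aux_iteration_correct (k : ℕ) (f : RPPx.RPP k) (x : Fin k → ℤ) (m : ℕ) :
    Steps
      (.app (auxIt k (isosOf f))
        (tupleV ((List.ofFn fun i => encZ (x i)) ++ [enpos m])).toTerm)
      ((tupleV ((List.ofFn fun i => encZ (((RPPx.eval f)^[m + 1] x) i))
          ++ [enpos m])).toTerm) :=
  steps_auxIt (isoSub_isosOf f 0 _) (isosOf_computes f) m x
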